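/- arXiv:2506.10717 — 4 statements merged into one kernel-verified Lean document; each statement's English description precedes it below -/
import Mathlib

section
/- Let S be a multiset of positive integers with sum bB, and assume every x in S satisfies x ≤ B. Form S' by adding 2bB copies of the integer B+1 to S, and set B' = B + 2B(B+1). Then S can be partitioned into b parts each summing to B if and only if S' can be partitioned into b parts each summing to B'. -/
/-- Adding `2bB` copies of `B+1` to a multiset `S` of positive
integers (each at most `B`, with total sum `bB`) and raising the capacity to
`B' = B + 2B(B+1)` yields an equivalent bin-packing instance. -/
theorem stmt_0 (S : Multiset ℕ) (b B : ℕ) (hb : 0 < b) (hB : 0 < B)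
    (hpos : ∀ x ∈ S, 0 < x) (hle : ∀ x ∈ S, x ≤ B) (hsum : S.sum = b * B) :
    (∃ P : Fin b → Multiset ℕ, (∑ i, P i) = S ∧ ∀ i, (P i).sum = B) ↔
    (∃ P : Fin b → Multiset ℕ,
      (∑ i, P i) = S + Multiset.replicate (2 * b * B) (B + 1) ∧
      ∀ i, (P i).sum = B + 2 * B * (B + 1)) := by
  constructor
  · rintro ⟨P, hP, hPsum⟩
    refine ⟨fun i => P i + Multiset.replicate (2 * B) (B + 1), ?_, ?_⟩
    · rw [Finset.sum_add_distrib, hP, Finset.sum_const, Multiset.nsmul_replicate,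
        Finset.card_univ, Fintype.card_fin]
      have hbB : b * (2 * B) = 2 * b * B := by ring
      rw [hbB]
    · intro i
      simp [Multiset.sum_replicate, hPsum i]
  · rintro ⟨P, hP, hPsum⟩
    have hnot : (B+1) ∉ S := fun h => by have := hle _ h; omega
    have hctot : ∑ i, (P i).count (B+1) = 2 * b * B := by
      rw [← Multiset.count_sum', hP, Multiset.count_add,
        Multiset.count_replicate_self, Multiset.count_eq_zero_of_notMem hnot]
      omega
    have hcle : ∀ i : Fin b, (P i).count (B+1) ≤ 2 * B := by
      intro i
      by_contra h
      push_neg at h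
      set c := (P i).count (B+1) with hc
      have hrep : Multiset.replicate c (B+1) ≤ P i :=
        Multiset.le_count_iff_replicate_le.mp le_rfl
      obtain ⟨u, hu⟩ := Multiset.le_iff_exists_add.mp hrep
      have hs : c * (B+1) ≤ (P i).sum := by
        rw [hu, Multiset.sum_add, Multiset.sum_replicate, smul_eq_mul]
        omega
      rw [hPsum i] at hs
      nlinarith
    have hceq : ∀ i : Fin b, (P i).count (B+1) = 2 * B := by
      have h2 : ∑ _i : Fin b, 2 * B = 2 * b * B := by
        rw [Finset.sum_const, smul_eq_mul]; simp [Finset.card_univ]; ring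
      intro i
      have := (Finset.sum_eq_sum_iff_of_le (fun i _ => hcle i)).mp
        (by rw [hctot, h2])
      exact this i (Finset.mem_univ i)
    refine ⟨fun i => (P i).filter (fun x => ¬ x = B+1), ?_, ?_⟩
    · have hsplit : ∀ i, P i =
          (P i).filter (fun x => ¬ x = B+1) + Multiset.replicate (2 * B) (B + 1) := by
        intro i
        have h := Multiset.filter_add_not (fun x => x = B+1) (P i)
        rw [Multiset.filter_eq', hceq i] at h
        exact h.symm.trans (add_comm _ _)
      have hsum2 : (∑ i, P i) =
          (∑ i, (P i).filter (fun x => ¬ x = B+1)) + Multiset.replicate (2 * b * B) (B + 1) := by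
        calc (∑ i, P i)
            = ∑ i, ((P i).filter (fun x => ¬ x = B+1) + Multiset.replicate (2 * B) (B + 1)) := by
              exact Finset.sum_congr rfl (fun i _ => hsplit i)
          _ = (∑ i, (P i).filter (fun x => ¬ x = B+1)) +
              ∑ _i : Fin b, Multiset.replicate (2 * B) (B + 1) := Finset.sum_add_distrib
          _ = _ := by
              congr 1
              rw [Finset.sum_const, Multiset.nsmul_replicate]
              congr 1
              simp [Finset.card_univ]; ring
      rw [hsum2] at hP
      exact add_right_cancel hP
    · intro i
      show ((P i).filter (fun x => ¬ x = B+1)).sum = B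
      have h := Multiset.filter_add_not (fun x => x = B+1) (P i)
      rw [Multiset.filter_eq', hceq i] at h
      have := congrArg Multiset.sum h
      rw [Multiset.sum_add, Multiset.sum_replicate, smul_eq_mul, hPsum i] at this
      omega
end

section
/- For every positive integer k and every graph G, the treedepth of the graph G_k obtained from G by subdividing each edge exactly k−1 times is at most td(G) + ⌈log₂ k⌉. -/
/-- An elimination forest of height at most `h`: a partial order (the
ancestor order) on the vertices in which the set of ancestors of every vertex
is a chain of at most `h` vertices (including the vertex itself), and the two
endpoints of every edge are comparable. -/
def ElimForestLE {V : Type*} (G : SimpleGraph V) (h : ℕ) : Prop :=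
  ∃ le : V → V → Prop, IsPartialOrder V le ∧
    (∀ v : V, IsChain le {u | le u v}) ∧
    (∀ u v : V, G.Adj u v → le u v ∨ le v u) ∧
    (∀ v : V, {u | le u v}.ncard ≤ h)

/-- The treedepth of a graph: the minimum height of an elimination forest. -/
noncomputable def treedepth {V : Type*} (G : SimpleGraph V) : ℕ :=
  sInf {h | ElimForestLE G h}

/-- The edges of `G` oriented from the smaller endpoint to the larger one. -/
def OrientedEdges {V : Type*} [LinearOrder V] (G : SimpleGraph V) : Type _ :=
  {p : V × V // G.Adj p.1 p.2 ∧ p.1 < p.2}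

/-- The graph `G_k` obtained from `G` by subdividing each edge exactly `k - 1`
times: each edge `uv` is replaced by a path `u, p₁, …, p_{k-1}, v`. -/
def Subdiv {V : Type*} [LinearOrder V] (G : SimpleGraph V) (k : ℕ) :
    SimpleGraph (V ⊕ (OrientedEdges G × Fin (k - 1))) :=
  SimpleGraph.fromRel (fun x y =>
    match x, y with
    | Sum.inl u, Sum.inl v => G.Adj u v ∧ k = 1
    | Sum.inl u, Sum.inr (e, i) =>
        (u = e.1.1 ∧ (i : ℕ) = 0) ∨ (u = e.1.2 ∧ (i : ℕ) = k - 2)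
    | Sum.inr (e, i), Sum.inr (f, j) => e = f ∧ (i : ℕ) + 1 = (j : ℕ)
    | Sum.inr _, Sum.inl _ => False)

/-!
Start from an optimal elimination forest of `G`. For every edge `e`, the `k - 1` subdivision
vertices of `e` form a path, which has an elimination tree of height `⌈log₂ k⌉`: number its
vertices `1, …, k - 1` and let `a = 2^t (2m + 1)` be the root of the subpath strictly between
`2^(t+1) m` and `2^(t+1) (m + 1)`, so that the ancestors of a vertex have pairwise distinct
`2`-adic valuations, all below `⌈log₂ k⌉`. Hang this tree below the deeper endpoint of `e`; every
edge of `G_k` then joins comparable vertices, and every ancestor chain gains at most `⌈log₂ k⌉`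
vertices.
-/

open Set

/-- `RulerLE a b`: in the elimination tree of the path `1 – 2 – 3 – ⋯` described above,
`a` is an ancestor of `b`. -/
def RulerLE (a b : ℕ) : Prop :=
  padicValNat 2 b ≤ padicValNat 2 a ∧
    b / 2 ^ (padicValNat 2 a + 1) = a / 2 ^ (padicValNat 2 a + 1)

lemma div_two_pow_eq_of_le {a b r s : ℕ} (hrs : r ≤ s) (h : a / 2 ^ r = b / 2 ^ r) :
    a / 2 ^ s = b / 2 ^ s := by
  obtain ⟨d, rfl⟩ := Nat.exists_eq_add_of_le hrs
  rw [pow_add, ← Nat.div_div_eq_div_mul, ← Nat.div_div_eq_div_mul, h]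

lemma two_pow_padicValNat_mul_div_add {a : ℕ} (ha : a ≠ 0) :
    2 ^ (padicValNat 2 a + 1) * (a / 2 ^ (padicValNat 2 a + 1)) + 2 ^ padicValNat 2 a = a := by
  have hndvd := pow_succ_padicValNat_not_dvd (p := 2) ha
  obtain ⟨m, hm⟩ := pow_padicValNat_dvd (p := 2) (n := a)
  set t := padicValNat 2 a
  have hm_odd : m % 2 = 1 := by
    rcases Nat.even_or_odd m with ⟨m', rfl⟩ | hodd
    · exact absurd ⟨m', by rw [hm]; ring⟩ hndvd
    · exact Nat.odd_iff.mp hodd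
  have hmod : a % 2 ^ (t + 1) = 2 ^ t := by
    rw [hm, pow_succ, Nat.mul_mod_mul_left, hm_odd, mul_one]
  rw [← hmod, Nat.div_add_mod]

lemma padicValNat_two_lt_clog {a n : ℕ} (ha : a ≠ 0) (han : a < n) :
    padicValNat 2 a < Nat.clog 2 n :=
  (Nat.pow_lt_pow_iff_right one_lt_two).mp <|
    (Nat.le_of_dvd (Nat.pos_of_ne_zero ha) pow_padicValNat_dvd).trans_lt
      (han.trans_le (Nat.le_pow_clog one_lt_two n))

namespace RulerLE

theorem refl (a : ℕ) : RulerLE a a := ⟨le_rfl, rfl⟩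

theorem trans {a b c : ℕ} (hab : RulerLE a b) (hbc : RulerLE b c) : RulerLE a c :=
  ⟨hbc.1.trans hab.1, (div_two_pow_eq_of_le (Nat.succ_le_succ hab.1) hbc.2).trans hab.2⟩

theorem of_padicValNat_le {a b c : ℕ} (hac : RulerLE a c) (hbc : RulerLE b c)
    (hv : padicValNat 2 b ≤ padicValNat 2 a) : RulerLE a b :=
  ⟨hv, (div_two_pow_eq_of_le (Nat.succ_le_succ hv) hbc.2).symm.trans hac.2⟩

theorem total_of_common {a b c : ℕ} (hac : RulerLE a c) (hbc : RulerLE b c) :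
    RulerLE a b ∨ RulerLE b a :=
  (le_total (padicValNat 2 b) (padicValNat 2 a)).imp
    (of_padicValNat_le hac hbc) (of_padicValNat_le hbc hac)

theorem eq_of_padicValNat_eq {a b : ℕ} (ha : a ≠ 0) (hb : b ≠ 0) (hab : RulerLE a b)
    (hv : padicValNat 2 a = padicValNat 2 b) : a = b := by
  rw [← two_pow_padicValNat_mul_div_add ha, ← two_pow_padicValNat_mul_div_add hb, ← hv, hab.2]

theorem eq_of_common_of_padicValNat_eq {a b c : ℕ} (ha : a ≠ 0) (hb : b ≠ 0)
    (hac : RulerLE a c) (hbc : RulerLE b c) (hv : padicValNat 2 a = padicValNat 2 b) : a = b :=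
  (total_of_common hac hbc).elim (eq_of_padicValNat_eq ha hb · hv)
    (fun hba => (eq_of_padicValNat_eq hb ha hba hv.symm).symm)

theorem antisymm {a b : ℕ} (ha : a ≠ 0) (hb : b ≠ 0) (hab : RulerLE a b) (hba : RulerLE b a) :
    a = b :=
  eq_of_padicValNat_eq ha hb hab (le_antisymm hba.1 hab.1)

theorem of_lt_add_of_lt_add {a b : ℕ} (ha : a ≠ 0) (hv : padicValNat 2 b ≤ padicValNat 2 a)
    (hab : a < b + 2 ^ padicValNat 2 a) (hba : b < a + 2 ^ padicValNat 2 a) : RulerLE a b := by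
  have hdecomp := two_pow_padicValNat_mul_div_add ha
  rw [pow_succ] at hdecomp
  refine ⟨hv, Nat.div_eq_of_lt_le ?_ ?_⟩ <;> rw [pow_succ] <;> nlinarith

theorem or_succ {a : ℕ} (ha : a ≠ 0) : RulerLE a (a + 1) ∨ RulerLE (a + 1) a := by
  rcases Nat.even_or_odd a with heven | hodd
  · have hv : 1 ≤ padicValNat 2 a := one_le_padicValNat_of_dvd ha heven.two_dvd
    have hv' : padicValNat 2 (a + 1) = 0 :=
      padicValNat.eq_zero_of_not_dvd heven.add_one.not_two_dvd_nat
    have : 2 ≤ 2 ^ padicValNat 2 a := Nat.le_self_pow (by omega) 2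
    exact .inl (of_lt_add_of_lt_add ha (by omega) (by omega) (by omega))
  · have hv : 1 ≤ padicValNat 2 (a + 1) :=
      one_le_padicValNat_of_dvd (by omega) hodd.add_one.two_dvd
    have hv' : padicValNat 2 a = 0 := padicValNat.eq_zero_of_not_dvd hodd.not_two_dvd_nat
    have : 2 ≤ 2 ^ padicValNat 2 (a + 1) := Nat.le_self_pow (by omega) 2
    exact .inr (of_lt_add_of_lt_add (by omega) (by omega) (by omega) (by omega))

end RulerLE

def pathLE (n : ℕ) (i j : Fin n) : Prop := RulerLE (i + 1) (j + 1)

instance (n : ℕ) : IsPartialOrder (Fin n) (pathLE n) where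
  refl _ := RulerLE.refl _
  trans _ _ _ := RulerLE.trans
  antisymm _ _ hij hji :=
    Fin.ext <| Nat.succ_injective <| RulerLE.antisymm (by omega) (by omega) hij hji

theorem isChain_pathLE {n : ℕ} (j : Fin n) : IsChain (pathLE n) {i | pathLE n i j} :=
  fun _ hi _ hi' _ => RulerLE.total_of_common hi hi'

theorem pathLE_or_pathLE_of_succ_eq {n : ℕ} {i j : Fin n} (h : (i : ℕ) + 1 = j) :
    pathLE n i j ∨ pathLE n j i := by
  unfold pathLE
  rw [← h]
  exact RulerLE.or_succ (by omega)

theorem ncard_pathLE_le {n : ℕ} (j : Fin n) :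
    {i | pathLE n i j}.ncard ≤ Nat.clog 2 (n + 1) := by
  calc {i | pathLE n i j}.ncard
      ≤ ((Finset.range (Nat.clog 2 (n + 1)) : Set ℕ)).ncard := by
        refine ncard_le_ncard_of_injOn (fun i : Fin n => padicValNat 2 (i + 1)) ?_ ?_
        · intro i _
          simpa using padicValNat_two_lt_clog (Nat.succ_ne_zero i) (by omega)
        · exact fun i hi i' hi' hv => Fin.ext <| Nat.succ_injective <|
            RulerLE.eq_of_common_of_padicValNat_eq (by omega) (by omega) hi hi' hv
    _ = Nat.clog 2 (n + 1) := by rw [ncard_coe_finset, Finset.card_range]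

section HangBelow

variable {V E P : Type*} (le : V → V → Prop) (r : P → P → Prop) (d : E → V)

def hangBelow : V ⊕ (E × P) → V ⊕ (E × P) → Prop
  | .inl u, .inl v => le u v
  | .inl u, .inr (e, _) => le u (d e)
  | .inr _, .inl _ => False
  | .inr (e, p), .inr (f, q) => e = f ∧ r p q

instance [IsPartialOrder V le] [IsPartialOrder P r] :
    IsPartialOrder (V ⊕ (E × P)) (hangBelow le r d) where
  refl
    | .inl u => refl_of le u
    | .inr (_, p) => ⟨rfl, refl_of r p⟩
  trans
    | .inl _, .inl _, .inl _, h₁, h₂ => trans_of le h₁ h₂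
    | .inl _, .inl _, .inr _, h₁, h₂ => trans_of le h₁ h₂
    | .inl _, .inr (_, _), .inr (_, _), h₁, ⟨rfl, _⟩ => h₁
    | .inr (_, _), .inr (_, _), .inr (_, _), ⟨rfl, h₁⟩, ⟨rfl, h₂⟩ =>
      ⟨rfl, trans_of r h₁ h₂⟩
    | .inl _, .inr _, .inl _, _, h => h.elim
    | .inr _, .inl _, _, h, _ => h.elim
    | .inr _, .inr _, .inl _, _, h => h.elim
  antisymm
    | .inl _, .inl _, h₁, h₂ => congrArg Sum.inl (antisymm h₁ h₂)
    | .inr (_, _), .inr (_, _), ⟨rfl, h₁⟩, ⟨_, h₂⟩ => by rw [antisymm h₁ h₂]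
    | .inl _, .inr _, _, h => h.elim
    | .inr _, .inl _, h, _ => h.elim

variable {le r}

theorem isChain_hangBelow (hle : ∀ v, IsChain le {u | le u v})
    (hr : ∀ q, IsChain r {p | r p q}) :
    ∀ x, IsChain (hangBelow le r d) {y | hangBelow le r d y x}
  | .inl v, .inl _, hu, .inl _, hu', hne => hle v hu hu' (hne <| congrArg _ ·)
  | .inr (e, _), .inl _, hu, .inl _, hu', hne => hle (d e) hu hu' (hne <| congrArg _ ·)
  | .inr (_, _), .inl _, hu, .inr (_, _), ⟨rfl, _⟩, _ => .inl hu
  | .inr (_, _), .inr (_, _), ⟨rfl, _⟩, .inl _, hu, _ => .inr hu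
  | .inr (_, q), .inr (_, _), ⟨rfl, hp⟩, .inr (_, _), ⟨rfl, hp'⟩, hne =>
      (hr q hp hp' (hne <| congrArg _ <| congrArg _ ·)).imp (⟨rfl, ·⟩) (⟨rfl, ·⟩)

variable (r)

theorem ncard_hangBelow_inl (v : V) :
    {x | hangBelow le r d x (.inl v)}.ncard = {u | le u v}.ncard := by
  have : {x | hangBelow le r d x (.inl v)} = Sum.inl '' {u | le u v} := by
    ext (u | _) <;> simp [hangBelow]
  rw [this, ncard_image_of_injective _ Sum.inl_injective]

variable {r} (le)

theorem ncard_hangBelow_inr_le (e : E) (q : P) :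
    {x | hangBelow le r d x (.inr (e, q))}.ncard ≤
      {u | le u (d e)}.ncard + {p | r p q}.ncard := by
  have : {x | hangBelow le r d x (.inr (e, q))} =
      Sum.inl '' {u | le u (d e)} ∪ (fun p => Sum.inr (e, p)) '' {p | r p q} := by
    ext (u | ⟨f, p⟩) <;> simp [hangBelow, eq_comm, and_comm]
  rw [this]
  refine (ncard_union_le _ _).trans_eq ?_
  rw [ncard_image_of_injective _ Sum.inl_injective,
    ncard_image_of_injective _ fun p p' h => by simpa using h]

end HangBelow

theorem exists_upper_endpoint {V : Type*} [LinearOrder V] {G : SimpleGraph V}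
    {le : V → V → Prop} [Std.Refl le] (hcomp : ∀ u v, G.Adj u v → le u v ∨ le v u) :
    ∃ d : OrientedEdges G → V, ∀ e, le e.1.1 (d e) ∧ le e.1.2 (d e) := by
  have : ∀ e : OrientedEdges G, ∃ w, le e.1.1 w ∧ le e.1.2 w := fun e =>
    (hcomp _ _ e.2.1).elim (fun h => ⟨_, h, refl_of le _⟩) (fun h => ⟨_, refl_of le _, h⟩)
  choose d hd using this
  exact ⟨d, hd⟩

theorem Subdiv.comparable_of_adj {V : Type*} [LinearOrder V] {G : SimpleGraph V} {k : ℕ}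
    {le : V → V → Prop} (hcomp : ∀ u v, G.Adj u v → le u v ∨ le v u)
    {d : OrientedEdges G → V} (hd : ∀ e, le e.1.1 (d e) ∧ le e.1.2 (d e))
    {x y : V ⊕ (OrientedEdges G × Fin (k - 1))} (hxy : (Subdiv G k).Adj x y) :
    hangBelow le (pathLE (k - 1)) d x y ∨ hangBelow le (pathLE (k - 1)) d y x := by
  have below_of_endpoint :
      ∀ {u : V} {e : OrientedEdges G}, u = e.1.1 ∨ u = e.1.2 → le u (d e) := by
    rintro u e (rfl | rfl)
    exacts [(hd e).1, (hd e).2]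
  have hang_of_succ_eq : ∀ {e : OrientedEdges G} {i j : Fin (k - 1)}, (i : ℕ) + 1 = j →
      hangBelow le (pathLE (k - 1)) d (.inr (e, i)) (.inr (e, j)) ∨
        hangBelow le (pathLE (k - 1)) d (.inr (e, j)) (.inr (e, i)) := fun h =>
    (pathLE_or_pathLE_of_succ_eq h).imp (⟨rfl, ·⟩) (⟨rfl, ·⟩)
  obtain ⟨-, hxy | hxy⟩ := (SimpleGraph.fromRel_adj _ x y).mp hxy <;>
    rcases x with u | ⟨e, i⟩ <;> rcases y with v | ⟨f, j⟩
  · exact hcomp u v hxy.1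
  · exact .inl (below_of_endpoint (hxy.imp And.left And.left))
  · exact hxy.elim
  · obtain ⟨rfl, h⟩ := hxy
    exact hang_of_succ_eq h
  · exact hcomp v u hxy.1 |>.symm
  · exact hxy.elim
  · exact .inr (below_of_endpoint (hxy.imp And.left And.left))
  · obtain ⟨rfl, h⟩ := hxy
    exact (hang_of_succ_eq h).symm

theorem ElimForestLE.subdiv {V : Type*} [LinearOrder V] {G : SimpleGraph V} {h : ℕ}
    (hG : ElimForestLE G h) (k : ℕ) : ElimForestLE (Subdiv G k) (h + Nat.clog 2 k) := by
  obtain ⟨le, hpo, hchain, hcomp, hcard⟩ := hG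
  obtain ⟨d, hd⟩ := exists_upper_endpoint hcomp
  refine ⟨hangBelow le (pathLE (k - 1)) d, inferInstance,
    isChain_hangBelow d hchain isChain_pathLE,
    fun _ _ hxy => Subdiv.comparable_of_adj hcomp hd hxy, ?_⟩
  rintro (v | ⟨e, j⟩)
  · rw [ncard_hangBelow_inl]
    exact (hcard v).trans (Nat.le_add_right _ _)
  · have hclog : Nat.clog 2 (k - 1 + 1) ≤ Nat.clog 2 k := by
      rcases k with _ | k <;> simp
    exact (ncard_hangBelow_inr_le le d e j).trans
      (Nat.add_le_add (hcard (d e)) ((ncard_pathLE_le j).trans hclog))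

theorem elimForestLE_card {V : Type*} [Finite V] (G : SimpleGraph V) :
    ElimForestLE G (Nat.card V) := by
  classical
  let : LinearOrder V := linearOrderOfSTO WellOrderingRel
  exact ⟨(· ≤ ·), inferInstance, fun _ _ _ _ _ _ => le_total _ _, fun _ _ _ => le_total _ _,
    fun _ => ncard_le_card _⟩

theorem elimForestLE_treedepth {V : Type*} [Finite V] (G : SimpleGraph V) :
    ElimForestLE G (treedepth G) :=
  Nat.sInf_mem (s := {h | ElimForestLE G h}) ⟨_, elimForestLE_card G⟩

theorem stmt_2_general {V : Type} [Fintype V] [LinearOrder V] (G : SimpleGraph V)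
    (k : ℕ) :
    treedepth (Subdiv G k) ≤ treedepth G + Nat.clog 2 k :=
  Nat.sInf_le ((elimForestLE_treedepth G).subdiv k)

/-- For every positive integer `k`,
`td(G_k) ≤ td(G) + ⌈log₂ k⌉`. -/
theorem stmt_2 {V : Type} [Fintype V] [LinearOrder V] (G : SimpleGraph V)
    (k : ℕ) (hk : 1 ≤ k) :
    treedepth (Subdiv G k) ≤ treedepth G + Nat.clog 2 k :=
  stmt_2_general G k
end

section
/- Let G be a graph whose vertex set is partitioned into d twin classes (each class consisting of pairwise true twins or pairwise false twins). If G contains no subgraph isomorphic to the complete bipartite graph K_{t,t}, then G has a vertex cover of size at most 2dt. -/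
/-!
Keep every twin class that is a clique or has fewer than `t` vertices. A clique on `2t` vertices
contains `K_{t,t}`, so each kept class has fewer than `2t` vertices, and the `d` kept classes
together have at most `2dt`. An edge missed by them joins two classes that are not cliques, hence
classes of false twins with at least `t` vertices each; false twins share their neighbourhoods,
so one edge between the two classes makes them completely joined, which is a `K_{t,t}`.
-/

open Finset

namespace SimpleGraph

variable {V α β : Type*} [Fintype α] [Fintype β] {G : SimpleGraph V}

theorem IsCompleteBetween.card_lt_or_card_lt (hfree : (completeBipartiteGraph α β).Free G)
    {A B : Finset V} (h : G.IsCompleteBetween A B) :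
    #A < Fintype.card α ∨ #B < Fintype.card β := by
  by_contra! ⟨hA, hB⟩
  obtain ⟨A', hA'A, hA'⟩ := exists_subset_card_eq hA
  obtain ⟨B', hB'B, hB'⟩ := exists_subset_card_eq hB
  exact hfree <| completeBipartiteGraph_isContained_iff.mpr
    ⟨A', B', hA', hB', fun a ha b hb ↦ h (hA'A ha) (hB'B hb)⟩

theorem IsClique.card_lt_card_add_card (hfree : (completeBipartiteGraph α β).Free G)
    {s : Finset V} (hs : G.IsClique (s : Set V)) :
    #s < Fintype.card α + Fintype.card β := by
  classical
  by_contra! h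
  obtain ⟨A, hAs, hA⟩ := exists_subset_card_eq (le_of_add_le_left h)
  have hcomplete : G.IsCompleteBetween A ↑(s \ A) := fun a ha b hb ↦
    hs (hAs ha) (sdiff_subset hb) (ne_of_mem_of_not_mem ha (mem_sdiff.1 hb).2)
  have := hcomplete.card_lt_or_card_lt hfree
  rw [card_sdiff_of_subset hAs] at this
  omega

theorem isCompleteBetween_of_adj {A B : Set V} {u v : V} (huv : G.Adj u v)
    (hA : ∀ a ∈ A, G.neighborSet a = G.neighborSet u)
    (hB : ∀ b ∈ B, G.neighborSet b = G.neighborSet v) : G.IsCompleteBetween A B := by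
  intro a ha b hb
  have hav : G.Adj a v := by rw [← mem_neighborSet, hA a ha]; exact huv
  have hba : G.Adj b a := by rw [← mem_neighborSet, hB b hb]; exact hav.symm
  exact hba.symm

def IsTwinClass (G : SimpleGraph V) (s : Set V) : Prop :=
  (∀ u v, u ∈ s → v ∈ s → u ≠ v →
    G.Adj u v ∧ ∀ w, w ≠ u → w ≠ v → (G.Adj u w ↔ G.Adj v w)) ∨
  (∀ u v, u ∈ s → v ∈ s → u ≠ v → ¬G.Adj u v ∧ ∀ w, G.Adj u w ↔ G.Adj v w)

theorem IsTwinClass.isClique_or_neighborSet_eq {s : Set V} (h : G.IsTwinClass s) :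
    G.IsClique s ∨ ∀ a ∈ s, ∀ b ∈ s, G.neighborSet a = G.neighborSet b := by
  refine h.imp (fun h u hu v hv huv ↦ (h u v hu hv huv).1) fun h a ha b hb ↦ ?_
  obtain rfl | hab := eq_or_ne a b
  · rfl
  · ext w; exact (h a b ha hb hab).2 w

theorem IsTwinClass.card_lt_or_isClique_of_adj (hfree : (completeBipartiteGraph α β).Free G)
    {A B : Finset V} (hA : G.IsTwinClass A) (hB : G.IsTwinClass B) {u v : V} (hu : u ∈ A)
    (hv : v ∈ B) (huv : G.Adj u v) :
    (#A < Fintype.card α ∨ G.IsClique (A : Set V)) ∨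
      (#B < Fintype.card β ∨ G.IsClique (B : Set V)) := by
  by_contra! ⟨⟨hA_card, hA_clique⟩, hB_card, hB_clique⟩
  have hA_nbhd := hA.isClique_or_neighborSet_eq.resolve_left hA_clique
  have hB_nbhd := hB.isClique_or_neighborSet_eq.resolve_left hB_clique
  have := (isCompleteBetween_of_adj huv (fun a ha ↦ hA_nbhd a ha u hu)
    (fun b hb ↦ hB_nbhd b hb v hv)).card_lt_or_card_lt hfree
  omega

end SimpleGraph

/-- If the vertex set of `G` is partitioned into `d` classes,
each consisting of pairwise true twins or pairwise false twins, and `G`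
contains no subgraph isomorphic to `K_{t,t}`, then `G` has a vertex cover of
size at most `2dt`. -/
theorem stmt_4 {V : Type} [Fintype V] (G : SimpleGraph V) (d t : ℕ)
    (c : V → Fin d)
    (hclass : ∀ i : Fin d,
      (∀ u v : V, c u = i → c v = i → u ≠ v →
        G.Adj u v ∧ ∀ w, w ≠ u → w ≠ v → (G.Adj u w ↔ G.Adj v w)) ∨
      (∀ u v : V, c u = i → c v = i → u ≠ v →
        ¬ G.Adj u v ∧ ∀ w, G.Adj u w ↔ G.Adj v w))
    (hfree : ¬ ∃ f : (Fin t ⊕ Fin t) ↪ V,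
      ∀ a b, (completeBipartiteGraph (Fin t) (Fin t)).Adj a b →
        G.Adj (f a) (f b)) :
    ∃ C : Finset V, (∀ u v, G.Adj u v → u ∈ C ∨ v ∈ C) ∧
      C.card ≤ 2 * d * t := by
  classical
  replace hfree : (completeBipartiteGraph (Fin t) (Fin t)).Free G :=
    fun ⟨f⟩ ↦ hfree ⟨f.toEmbedding, fun _ _ h ↦ f.toHom.map_adj h⟩
  let F (i : Fin d) : Finset V := {v | c v = i}
  have htwins (i : Fin d) : G.IsTwinClass (F i : Set V) := by
    rw [coe_filter_univ]
    exact hclass i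
  let K : Finset (Fin d) := {i | #(F i) < t ∨ G.IsClique (F i : Set V)}
  refine ⟨K.biUnion F, fun u v huv ↦ ?_, ?_⟩
  · have hmem (w : V) : w ∈ K.biUnion F ↔ c w ∈ K := by simp [F]
    have := (htwins (c u)).card_lt_or_isClique_of_adj hfree (htwins (c v))
      (by simp [F]) (by simp [F]) huv
    simpa only [hmem, K, mem_filter, mem_univ, true_and, Fintype.card_fin] using this
  · have hK (i : Fin d) (hi : i ∈ K) : #(F i) ≤ 2 * t := by
      obtain hsmall | hclique := (mem_filter.1 hi).2
      · omega
      · simpa [two_mul] using (hclique.card_lt_card_add_card hfree).le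
    calc #(K.biUnion F) ≤ #K * (2 * t) := card_biUnion_le_card_mul _ _ _ hK
      _ ≤ d * (2 * t) := by gcongr; simpa using card_le_univ K
      _ = 2 * d * t := by ring
end

section
/- Suppose every k-planar graph on n vertices has at most 3.81·n·√(2k) edges. Then every k-planar graph G with neighborhood diversity d has vertex cover number at most 2d · 8⌈√(2k)⌉ = 16d⌈√(2k)⌉. -/
/-!
A `k`-planar graph cannot contain `K_{t,t}` for `t = 8⌈√(2k)⌉`, since `K_{t,t}` has `t²`
edges on `2t` vertices and `t² > 3.81 · 2t · √(2k)`. In a graph of bounded neighborhood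
diversity, two adjacent twin classes are completely joined, and an adjacent pair inside a
class makes the class a clique. So once `K_{t,t}` is excluded, every edge meets a class with
fewer than `2t` vertices, and these small classes together form a vertex cover of size at
most `2dt`.
-/

open Finset

namespace SimpleGraph

variable {V ι : Type*} {G : SimpleGraph V}

theorem ncard_edgeSet_completeBipartiteGraph (α β : Type*) [Fintype α] [Fintype β] :
    (completeBipartiteGraph α β).edgeSet.ncard = Fintype.card α * Fintype.card β := by
  simp [Set.ncard_def, encard_edgeSet_completeBipartiteGraph, ENat.card_eq_coe_fintype_card]

theorem completeBipartiteGraph_isContained_of_isCompleteBetween {n : ℕ} {A B : Finset V}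
    (hA : n ≤ #A) (hB : n ≤ #B) (h : G.IsCompleteBetween A B) :
    completeBipartiteGraph (Fin n) (Fin n) ⊑ G := by
  obtain ⟨A', hA'A, hA'⟩ := exists_subset_card_eq hA
  obtain ⟨B', hB'B, hB'⟩ := exists_subset_card_eq hB
  exact completeBipartiteGraph_isContained_iff.mpr
    ⟨A', B', by simpa using hA', by simpa using hB', fun _ hx _ hy ↦ h (hA'A hx) (hB'B hy)⟩

theorem completeBipartiteGraph_isContained_of_isClique [DecidableEq V] {n : ℕ} {S : Finset V}
    (hS : 2 * n ≤ #S) (h : G.IsClique (S : Set V)) :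
    completeBipartiteGraph (Fin n) (Fin n) ⊑ G := by
  obtain ⟨A, hAS, hA⟩ := exists_subset_card_eq (show n ≤ #S by omega)
  have hB : n ≤ #(S \ A) := by rw [card_sdiff_of_subset hAS]; omega
  refine completeBipartiteGraph_isContained_of_isCompleteBetween hA.ge hB fun x hx y hy ↦ ?_
  have hy' := mem_sdiff.mp hy
  exact h (hAS hx) hy'.1 fun hxy ↦ hy'.2 (hxy ▸ hx)

/-- The least number of classes of such a `c` is the neighborhood diversity of `G`. -/
def IsTwinPartition (G : SimpleGraph V) (c : V → ι) : Prop :=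
  ∀ i, (∀ u v, c u = i → c v = i → u ≠ v →
        G.Adj u v ∧ ∀ w, w ≠ u → w ≠ v → (G.Adj u w ↔ G.Adj v w)) ∨
      (∀ u v, c u = i → c v = i → u ≠ v → ¬ G.Adj u v ∧ ∀ w, G.Adj u w ↔ G.Adj v w)

namespace IsTwinPartition

variable {c : V → ι}

theorem adj_of_adj_of_eq_of_ne {u w x : V} (hc : G.IsTwinPartition c) (huw : G.Adj u w)
    (hx : c x = c u) (hw : c w ≠ c u) : G.Adj x w := by
  obtain rfl | hxu := eq_or_ne x u
  · exact huw
  have hwu : w ≠ u := fun h ↦ hw (h ▸ rfl)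
  have hwx : w ≠ x := fun h ↦ hw (h ▸ hx)
  rcases hc (c u) with h | h
  · exact ((h u x rfl hx hxu.symm).2 w hwu hwx).mp huw
  · exact ((h u x rfl hx hxu.symm).2 w).mp huw

theorem isCompleteBetween_of_adj {u v : V} (hc : G.IsTwinPartition c) (huv : G.Adj u v)
    (hne : c u ≠ c v) :
    G.IsCompleteBetween {x | c x = c u} {y | c y = c v} := fun x hx y hy ↦
  have hyu : G.Adj y u := hc.adj_of_adj_of_eq_of_ne huv.symm hy hne
  hc.adj_of_adj_of_eq_of_ne hyu.symm hx (by rw [show c y = c v from hy]; exact hne.symm)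

theorem isClique_of_adj {u v : V} (hc : G.IsTwinPartition c) (huv : G.Adj u v)
    (heq : c u = c v) :
    G.IsClique {x | c x = c u} := by
  intro x hx y hy hxy
  rcases hc (c u) with h | h
  · exact (h x y hx hy hxy).1
  · exact absurd huv (h u v rfl heq.symm huv.ne).1

/-- The classes with fewer than `2n` vertices cover every edge once `K_{n,n}` is excluded. -/
theorem exists_vertexCover_of_free [Fintype V] [Fintype ι] {n : ℕ} (hc : G.IsTwinPartition c)
    (hfree : (completeBipartiteGraph (Fin n) (Fin n)).Free G) :
    ∃ C : Finset V, (∀ u v, G.Adj u v → u ∈ C ∨ v ∈ C) ∧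
      #C ≤ Fintype.card ι * (2 * n) := by
  classical
  let cls : ι → Finset V := fun i ↦ {x | c x = i}
  have coe_cls (i : ι) : (cls i : Set V) = {x | c x = i} := coe_filter_univ _
  let small : Finset ι := {i | #(cls i) < 2 * n}
  refine ⟨small.biUnion cls, fun u v huv ↦ ?_, ?_⟩
  · by_contra! hcov
    simp only [small, cls, mem_biUnion, mem_filter_univ, exists_eq_right', not_lt] at hcov
    obtain ⟨hu, hv⟩ := hcov
    by_cases heq : c u = c v
    · exact hfree <| completeBipartiteGraph_isContained_of_isClique hu
        (by rw [coe_cls]; exact hc.isClique_of_adj huv heq)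
    · exact hfree <| completeBipartiteGraph_isContained_of_isCompleteBetween
        ((by omega : n ≤ 2 * n).trans hu) ((by omega : n ≤ 2 * n).trans hv)
        (by rw [coe_cls, coe_cls]; exact hc.isCompleteBetween_of_adj huv heq)
  · calc #(small.biUnion cls)
        ≤ #small * (2 * n) :=
          card_biUnion_le_card_mul _ _ _ fun i hi ↦ ((mem_filter_univ i).mp hi).le
      _ ≤ Fintype.card ι * (2 * n) := by gcongr; exact card_le_univ _

end IsTwinPartition

end SimpleGraph

open SimpleGraph

/-- Assuming (a) every `k`-planar graph on `n` vertices has at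
most `3.81 · n · √(2k)` edges and (b) `k`-planarity is closed under taking
subgraphs, every `k`-planar graph whose vertex set is partitioned into `d`
twin classes (neighborhood diversity `d`) has a vertex cover of size at most
`2d · 8⌈√(2k)⌉ = 16d⌈√(2k)⌉`. -/
theorem stmt_6 (k : ℕ) (hk : 1 ≤ k)
    (KPlanar : ∀ (V : Type) [Fintype V], SimpleGraph V → Prop)
    (hbound : ∀ (V : Type) [Fintype V] (G : SimpleGraph V), KPlanar V G →
      (G.edgeSet.ncard : ℝ) ≤ 3.81 * (Fintype.card V) * Real.sqrt (2 * k))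
    (hsub : ∀ (V W : Type) [Fintype V] [Fintype W]
      (G : SimpleGraph V) (H : SimpleGraph W) (f : W ↪ V),
      (∀ a b, H.Adj a b → G.Adj (f a) (f b)) → KPlanar V G → KPlanar W H)
    {V : Type} [Fintype V] (G : SimpleGraph V) (hG : KPlanar V G)
    (d : ℕ) (c : V → Fin d)
    (hclass : ∀ i : Fin d,
      (∀ u v : V, c u = i → c v = i → u ≠ v →
        G.Adj u v ∧ ∀ w, w ≠ u → w ≠ v → (G.Adj u w ↔ G.Adj v w)) ∨
      (∀ u v : V, c u = i → c v = i → u ≠ v →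
        ¬ G.Adj u v ∧ ∀ w, G.Adj u w ↔ G.Adj v w)) :
    ∃ C : Finset V, (∀ u v, G.Adj u v → u ∈ C ∨ v ∈ C) ∧
      C.card ≤ 16 * d * ⌈Real.sqrt (2 * k)⌉₊ := by
  set t := 8 * ⌈Real.sqrt (2 * k)⌉₊
  have hs : 0 < Real.sqrt (2 * k) := Real.sqrt_pos.mpr (by positivity)
  have ht : 8 * Real.sqrt (2 * k) ≤ t := by
    simp only [t, Nat.cast_mul, Nat.cast_ofNat]
    linarith [Nat.le_ceil (Real.sqrt (2 * k))]
  have hfree : (completeBipartiteGraph (Fin t) (Fin t)).Free G := by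
    rintro ⟨f⟩
    have hKtt := hbound _ _ (hsub _ _ G _ f.toEmbedding (fun _ _ ↦ f.toHom.map_adj) hG)
    simp only [ncard_edgeSet_completeBipartiteGraph, Fintype.card_sum, Fintype.card_fin,
      Nat.cast_mul, Nat.cast_add] at hKtt
    nlinarith
  obtain ⟨C, hcover, hcard⟩ := IsTwinPartition.exists_vertexCover_of_free hclass hfree
  rw [Fintype.card_fin] at hcard
  exact ⟨C, hcover, hcard.trans_eq (by ring)⟩
end
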